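/- arXiv:2411.16364 — 5 statements merged into one kernel-verified Lean document; each statement's English description precedes it below -/
import Mathlib

section
/- Let K be a field and S = K[x_1, …, x_n] a polynomial ring with a fixed monomial order <, and let f, g ∈ S be polynomials such that the initial term in_<(fg) is a squarefree monomial. Then C_f ⊆ C_{fg}, i.e., every Knutson ideal associated to f is a Knutson ideal associated to fg. -/
open MvPolynomial

universe u v

/-! ### Cells and collections of cells -/

/-- A cell, identified by its lower-left corner: the cell `[a, a+(1,1)]`. -/
abbrev Cell : Type := ℕ × ℕ

/-- The four vertices (corners) of a cell. -/
def cellVertices (c : Cell) : Finset (ℕ × ℕ) :=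
  {(c.1, c.2), (c.1 + 1, c.2), (c.1, c.2 + 1), (c.1 + 1, c.2 + 1)}

/-- The vertex set of a collection of cells. -/
def vertexSet (P : Finset Cell) : Finset (ℕ × ℕ) :=
  P.biUnion cellVertices

/-- Two cells share a common edge. -/
def AdjCells (c d : Cell) : Prop :=
  (c.1 = d.1 ∧ (c.2 + 1 = d.2 ∨ d.2 + 1 = c.2)) ∨
    (c.2 = d.2 ∧ (c.1 + 1 = d.1 ∨ d.1 + 1 = c.1))

/-- A polyomino: a nonempty collection of cells with positive coordinates in which
any two cells are connected by a path of cells of the collection, consecutive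
ones sharing an edge. -/
def IsPolyomino (P : Finset Cell) : Prop :=
  P.Nonempty ∧ (∀ c ∈ P, 1 ≤ c.1 ∧ 1 ≤ c.2) ∧
    ∀ c ∈ P, ∀ d ∈ P,
      Relation.ReflTransGen (fun x y => x ∈ P ∧ y ∈ P ∧ AdjCells x y) c d

/-- A collection of cells is simple if any two cells not in it are connected by a path
of cells not in it. -/
def IsSimple (P : Finset Cell) : Prop :=
  ∀ c d : Cell, c ∉ P → d ∉ P →
    Relation.ReflTransGen (fun x y => x ∉ P ∧ y ∉ P ∧ AdjCells x y) c d

/-- A collection of cells is thin if it contains no 2×2 square of cells. -/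
def IsThin (P : Finset Cell) : Prop :=
  ¬ ∃ c : Cell, c ∈ P ∧ (c.1 + 1, c.2) ∈ P ∧ (c.1, c.2 + 1) ∈ P ∧ (c.1 + 1, c.2 + 1) ∈ P

/-- The cell with lower-left corner `c` lies inside the interval `[u, w]`. -/
def CellInInterval (u w : ℕ × ℕ) (c : Cell) : Prop :=
  u.1 ≤ c.1 ∧ c.1 + 1 ≤ w.1 ∧ u.2 ≤ c.2 ∧ c.2 + 1 ≤ w.2

/-- `[a, b]` is an inner interval of the collection of cells `P`:
it is a proper interval all of whose cells belong to `P`. -/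
def IsInnerInterval (P : Finset Cell) (a b : ℕ × ℕ) : Prop :=
  a.1 < b.1 ∧ a.2 < b.2 ∧ ∀ c : Cell, CellInInterval a b c → c ∈ P

/-- A maximal inner interval of `P`. -/
def IsMaximalInnerInterval (P : Finset Cell) (a b : ℕ × ℕ) : Prop :=
  IsInnerInterval P a b ∧
    ∀ a' b' : ℕ × ℕ, IsInnerInterval P a' b' → a'.1 ≤ a.1 → a'.2 ≤ a.2 →
      b.1 ≤ b'.1 → b.2 ≤ b'.2 → a' = a ∧ b' = b

/-! ### Convexity notions -/

def HorizontallyConvex (P : Finset Cell) : Prop :=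
  ∀ i k j l : ℕ, (i, j) ∈ P → (k, j) ∈ P → i ≤ l → l ≤ k → (l, j) ∈ P

def VerticallyConvex (P : Finset Cell) : Prop :=
  ∀ i j k l : ℕ, (i, j) ∈ P → (i, k) ∈ P → j ≤ l → l ≤ k → (i, l) ∈ P

/-- A parallelogram polyomino: a convex polyomino whose vertex set is a sublattice of ℕ². -/
def IsParallelogram (P : Finset Cell) : Prop :=
  IsPolyomino P ∧ HorizontallyConvex P ∧ VerticallyConvex P ∧
    ∀ u ∈ vertexSet P, ∀ v ∈ vertexSet P,
      (min u.1 v.1, min u.2 v.2) ∈ vertexSet P ∧ (max u.1 v.1, max u.2 v.2) ∈ vertexSet P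

/-- `v` is a left-most vertex of `P`. -/
def IsLeftmost (P : Finset Cell) (v : ℕ × ℕ) : Prop :=
  v ∈ vertexSet P ∧ ∀ w ∈ vertexSet P, w.2 = v.2 → v.1 ≤ w.1

/-- A ladder polyomino: a horizontally convex polyomino each of whose left-most vertices,
except the lowest one, is the upper-left vertex of a cell of `P`. -/
def IsLadder (P : Finset Cell) : Prop :=
  IsPolyomino P ∧ HorizontallyConvex P ∧
    ∀ v : ℕ × ℕ, IsLeftmost P v →
      (∀ w : ℕ × ℕ, IsLeftmost P w → v.2 ≤ w.2) ∨ (1 ≤ v.2 ∧ (v.1, v.2 - 1) ∈ P)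

/-- The region of the plane covered by a collection of cells. -/
def spSet (P : Finset Cell) : Set (ℝ × ℝ) :=
  ⋃ c ∈ P, {x : ℝ × ℝ | (c.1 : ℝ) ≤ x.1 ∧ x.1 ≤ (c.1 : ℝ) + 1 ∧
      (c.2 : ℝ) ≤ x.2 ∧ x.2 ≤ (c.2 : ℝ) + 1}

/-- A ladder polyomino `P` is based on a polyomino `Q`:
`sp(P) ∩ sp(Q)` is the horizontal segment from `a₁` to `(b, a₁.2)` where `a₁` is the lowest
left-most vertex of `P` and `b` is maximal with `(b, a₁.2) ∈ V(P)`. -/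
def BasedOn (P Q : Finset Cell) : Prop :=
  ∃ a₁ : ℕ × ℕ, ∃ b : ℕ, IsLeftmost P a₁ ∧ (∀ w : ℕ × ℕ, IsLeftmost P w → a₁.2 ≤ w.2) ∧
    (b, a₁.2) ∈ vertexSet P ∧ (∀ v : ℕ, (v, a₁.2) ∈ vertexSet P → v ≤ b) ∧
    spSet P ∩ spSet Q =
      {x : ℝ × ℝ | (a₁.1 : ℝ) ≤ x.1 ∧ x.1 ≤ (b : ℝ) ∧ x.2 = (a₁.2 : ℝ)}

/-! ### Closed and weakly closed paths -/

/-- A closed path polyomino. -/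
def IsClosedPath (P : Finset Cell) : Prop :=
  ∃ (n : ℕ) (A : ℕ → Cell), 6 ≤ n ∧
    A n = A 0 ∧
    (∀ c : Cell, c ∈ P ↔ ∃ i < n, A i = c) ∧
    (∀ i j : ℕ, 1 ≤ i → i < j → j ≤ n → A i ≠ A j) ∧
    (∀ i < n, AdjCells (A i) (A (i + 1))) ∧
    (∀ i < n, ∀ j < n,
      ((j : ZMod n) ≠ (i : ZMod n) - 2 ∧ (j : ZMod n) ≠ (i : ZMod n) - 1 ∧
       (j : ZMod n) ≠ (i : ZMod n) ∧ (j : ZMod n) ≠ (i : ZMod n) + 1 ∧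
       (j : ZMod n) ≠ (i : ZMod n) + 2) →
      cellVertices (A i) ∩ cellVertices (A j) = ∅)

/-- A weakly closed path polyomino. -/
def IsWeaklyClosedPath (P : Finset Cell) : Prop :=
  ∃ (n : ℕ) (A : ℕ → Cell), 6 ≤ n ∧
    A n = A 0 ∧
    (∀ c : Cell, c ∈ P ↔ ∃ i < n, A i = c) ∧
    (∀ i j : ℕ, 1 ≤ i → i < j → j ≤ n → A i ≠ A j) ∧
    (cellVertices (A 0) ∩ cellVertices (A (n - 1))).card = 1 ∧
    (∀ i : ℕ, i ≤ n - 2 → AdjCells (A i) (A (i + 1))) ∧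
    (∀ i : ℕ, 1 ≤ i → i ≤ n → ∀ j : ℕ, 1 ≤ j → j ≤ n →
      ((j : ZMod n) ≠ (i : ZMod n) - 2 ∧ (j : ZMod n) ≠ (i : ZMod n) - 1 ∧
       (j : ZMod n) ≠ (i : ZMod n) ∧ (j : ZMod n) ≠ (i : ZMod n) + 1 ∧
       (j : ZMod n) ≠ (i : ZMod n) + 2) →
      cellVertices (A i) ∩ cellVertices (A j) = ∅)

/-! ### Polyomino ideals -/

/-- The polynomial ring `K[x_v : v ∈ V(P)]`. -/
abbrev PolyRing (K : Type*) [Field K] (P : Finset Cell) : Type _ :=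
  MvPolynomial {v : ℕ × ℕ // v ∈ vertexSet P} K

/-- The binomials attached to the inner intervals of a sub-collection `Q` of `P`,
viewed inside `K[x_v : v ∈ V(P)]`. -/
def innerIntervalBinomials (K : Type*) [Field K] (P Q : Finset Cell) :
    Set (PolyRing K P) :=
  {f | ∃ a b c d : {v : ℕ × ℕ // v ∈ vertexSet P},
      IsInnerInterval Q (a : ℕ × ℕ) (b : ℕ × ℕ) ∧
      (c : ℕ × ℕ) = ((a : ℕ × ℕ).1, (b : ℕ × ℕ).2) ∧
      (d : ℕ × ℕ) = ((b : ℕ × ℕ).1, (a : ℕ × ℕ).2) ∧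
      f = X a * X b - X c * X d}

/-- The ideal of inner 2-minors of a sub-collection `Q` of `P`, inside `K[x_v : v ∈ V(P)]`. -/
noncomputable def cellsIdeal (K : Type*) [Field K] (P Q : Finset Cell) : Ideal (PolyRing K P) :=
  Ideal.span (innerIntervalBinomials K P Q)

/-- The polyomino ideal `I_P`. -/
noncomputable def polyominoIdeal (K : Type*) [Field K] (P : Finset Cell) : Ideal (PolyRing K P) :=
  cellsIdeal K P P

/-! ### Monomial orders, initial monomials, Knutson ideals -/

/-- `μ` is the initial (leading) monomial of `f` with respect to the strict
monomial-comparison relation `lt`. -/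
def IsInitialMonomialRel {σ K : Type*} [CommSemiring K]
    (lt : (σ →₀ ℕ) → (σ →₀ ℕ) → Prop) (f : MvPolynomial σ K) (μ : σ →₀ ℕ) : Prop :=
  μ ∈ f.support ∧ ∀ ν ∈ f.support, ν ≠ μ → lt ν μ

/-- The strict comparison relation of a monomial order. -/
def monomialLT {σ : Type*} (m : MonomialOrder σ) (μ ν : σ →₀ ℕ) : Prop :=
  m.toSyn μ < m.toSyn ν

/-- A squarefree monomial exponent. -/
def SquarefreeMonomial {σ : Type*} (μ : σ →₀ ℕ) : Prop := ∀ v, μ v ≤ 1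

/-- The initial monomial of `f` with respect to `m` exists and is squarefree. -/
def HasSquarefreeInitial {σ K : Type*} [CommSemiring K] (m : MonomialOrder σ)
    (f : MvPolynomial σ K) : Prop :=
  ∃ μ, IsInitialMonomialRel (monomialLT m) f μ ∧ SquarefreeMonomial μ

/-- The family `C_f` of Knutson ideals associated to `f`: the smallest family of ideals
containing `(f)` and closed under colon ideals, sums and intersections. -/
inductive KnutsonClass {σ K : Type*} [Field K] (f : MvPolynomial σ K) :
    Ideal (MvPolynomial σ K) → Prop
  | base : KnutsonClass f (Ideal.span {f})
  | colon (I J : Ideal (MvPolynomial σ K)) :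
      KnutsonClass f I → KnutsonClass f (Submodule.colon I J)
  | add (I J : Ideal (MvPolynomial σ K)) :
      KnutsonClass f I → KnutsonClass f J → KnutsonClass f (I + J)
  | inter (I J : Ideal (MvPolynomial σ K)) :
      KnutsonClass f I → KnutsonClass f J → KnutsonClass f (I ⊓ J)

/-- An ideal is a Knutson ideal if it belongs to `C_f` for some `f` whose initial
monomial (with respect to some monomial order) is squarefree. -/
def IsKnutsonIdeal {σ : Type u} {K : Type*} [Field K] (I : Ideal (MvPolynomial σ K)) : Prop :=
  ∃ (m : MonomialOrder.{u, u} σ) (f : MvPolynomial σ K),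
    HasSquarefreeInitial m f ∧ KnutsonClass f I

/-! ### Height, unmixedness, homogeneity, König type -/

/-- The height of an ideal: the infimum of the heights of the primes containing it. -/
noncomputable def idealHeight {R : Type*} [CommRing R] (I : Ideal R) : ℕ∞ :=
  ⨅ (p : PrimeSpectrum R) (_ : I ≤ p.asIdeal), Order.height p

/-- An ideal is unmixed if all its associated primes have the same height. -/
def IsUnmixed {R : Type*} [CommRing R] (I : Ideal R) : Prop :=
  ∀ p q : Ideal R, IsAssociatedPrime p (R ⧸ I) → IsAssociatedPrime q (R ⧸ I) →
    idealHeight p = idealHeight q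

/-- A homogeneous ideal of a polynomial ring. -/
def IsHomogeneousIdeal {σ K : Type*} [CommSemiring K] (I : Ideal (MvPolynomial σ K)) : Prop :=
  ∀ f ∈ I, ∀ n : ℕ, MvPolynomial.homogeneousComponent n f ∈ I

/-- `I` is of König type with respect to the monomial order `m` and the polynomials
`f 0, …, f (h-1)`. -/
def IsKonigTypeWrt {σ K : Type*} [Field K] (m : MonomialOrder σ)
    (I : Ideal (MvPolynomial σ K)) (h : ℕ) (f : Fin h → MvPolynomial σ K) : Prop :=
  idealHeight I = (h : ℕ∞) ∧
  Function.Injective f ∧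
  (∃ G : Set (MvPolynomial σ K),
    (∀ g ∈ G, ∃ n : ℕ, MvPolynomial.IsHomogeneous g n) ∧
    Ideal.span G = I ∧
    (∀ g ∈ G, Ideal.span (G \ {g}) ≠ I) ∧
    ∀ i, f i ∈ G) ∧
  ∃ μ : Fin h → (σ →₀ ℕ),
    (∀ i, IsInitialMonomialRel (monomialLT m) (f i) (μ i)) ∧
    RingTheory.Sequence.IsRegular (MvPolynomial σ K)
      (List.ofFn fun i =>
        (MvPolynomial.monomial (μ i) (MvPolynomial.coeff (μ i) (f i)) : MvPolynomial σ K))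

/-- `I` is of König type. -/
def IsKonigType {σ : Type u} {K : Type*} [Field K] (I : Ideal (MvPolynomial σ K)) : Prop :=
  ∃ (m : MonomialOrder.{u, u} σ) (h : ℕ) (f : Fin h → MvPolynomial σ K), IsKonigTypeWrt m I h f

/-! ### The graded reverse lexicographic order used in the paper -/

/-- The variable order `x_{(i,j)} < x_{(k,l)}` iff `i < k`, or `i = k` and `j < l`. -/
def VarLT (u v : ℕ × ℕ) : Prop := u.1 < v.1 ∨ (u.1 = v.1 ∧ u.2 < v.2)

/-- The strict graded reverse lexicographic comparison of exponent vectors, where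
variables are embedded into ℕ² and ordered by `VarLT`. -/
def GrevlexLT {σ : Type*} (emb : σ → ℕ × ℕ) (μ ν : σ →₀ ℕ) : Prop :=
  (μ.sum fun _ e => e) < (ν.sum fun _ e => e) ∨
    ((μ.sum fun _ e => e) = (ν.sum fun _ e => e) ∧
      ∃ v, ν v < μ v ∧ ∀ w, VarLT (emb w) (emb v) → μ w = ν w)

/-- The initial ideal of `I` with respect to the relation `lt`. -/
noncomputable def initialIdealRel {σ K : Type*} [Field K] (lt : (σ →₀ ℕ) → (σ →₀ ℕ) → Prop)
    (I : Ideal (MvPolynomial σ K)) : Ideal (MvPolynomial σ K) :=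
  Ideal.span {g | ∃ f ∈ I, ∃ μ, IsInitialMonomialRel lt f μ ∧
    g = MvPolynomial.monomial μ (1 : K)}

/-- `G` is a Gröbner basis of `I` with respect to the relation `lt`. -/
def IsGroebnerBasisRel {σ K : Type*} [Field K] (lt : (σ →₀ ℕ) → (σ →₀ ℕ) → Prop)
    (G : Set (MvPolynomial σ K)) (I : Ideal (MvPolynomial σ K)) : Prop :=
  (∀ g ∈ G, g ≠ 0 ∧ g ∈ I) ∧
    Ideal.span {g | ∃ f ∈ G, ∃ μ, IsInitialMonomialRel lt f μ ∧
      g = MvPolynomial.monomial μ (1 : K)} = initialIdealRel lt I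

/-! ### Anti-diagonal chains of vertices and the associated determinants -/

/-- The vertices `v_{k,l} = (i+l, j+n+1-l)`, `1 ≤ l ≤ n`, of an anti-diagonal chain. -/
def chainVerts (i j n : ℕ) : Finset (ℕ × ℕ) :=
  (Finset.Icc 1 n).image fun l => (i + l, j + n + 1 - l)

/-- The cells whose anti-diagonal vertices are consecutive vertices of the chain. -/
def chainCells (i j n : ℕ) : Finset Cell :=
  (Finset.Icc 1 (n - 1)).image fun l => (i + l, j + n - l)

/-- The chain starting at `(i+1, j+n)` of length `n` is a maximal successor-chain in `P`. -/
def IsDiagChain (P : Finset Cell) (i j n : ℕ) : Prop :=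
  1 ≤ n ∧
  (∀ l : ℕ, 1 ≤ l → l ≤ n → (i + l, j + n + 1 - l) ∈ vertexSet P) ∧
  (∀ l : ℕ, 1 ≤ l → l ≤ n - 1 → (i + l, j + n - l) ∈ P) ∧
  (i, j + n) ∉ P ∧
  (i + n, j) ∉ P

/-- The data `c k = (i_k, j_k, n_k)`, `k : Fin s`, is the chain partition of `V(P)`. -/
def IsDiagChainPartition (P : Finset Cell) (s : ℕ) (c : Fin s → ℕ × ℕ × ℕ) : Prop :=
  (∀ k, IsDiagChain P (c k).1 (c k).2.1 (c k).2.2) ∧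
  (∀ k l, k ≠ l →
    Disjoint (chainVerts (c k).1 (c k).2.1 (c k).2.2)
      (chainVerts (c l).1 (c l).2.1 (c l).2.2)) ∧
  (Finset.univ.biUnion (fun k => chainVerts (c k).1 (c k).2.1 (c k).2.2) = vertexSet P) ∧
  (∀ k l : Fin s, k < l →
    ((c k).1 + 1) + ((c k).2.1 + (c k).2.2) < ((c l).1 + 1) + ((c l).2.1 + (c l).2.2) ∨
    (((c k).1 + 1) + ((c k).2.1 + (c k).2.2) = ((c l).1 + 1) + ((c l).2.1 + (c l).2.2) ∧
      (c k).1 + 1 < (c l).1 + 1))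

/-- The determinant `f_k` of the matrix `M_k` associated to a chain: the `(a,b)` entry is
`x_{(i+a, j+b)}` if `(i+a, j+b) ∈ V(P)` and `0` otherwise (`1 ≤ a, b ≤ n`). -/
noncomputable def chainDet (K : Type*) [Field K] (P : Finset Cell) (i j n : ℕ) :
    PolyRing K P :=
  Matrix.det (Matrix.of fun a b : Fin n =>
    if h : (i + (a : ℕ) + 1, j + (b : ℕ) + 1) ∈ vertexSet P then
      (X ⟨(i + (a : ℕ) + 1, j + (b : ℕ) + 1), h⟩ : PolyRing K P) else 0)

/-- The exponent vector of the squarefree monomial `∏_{v ∈ V} x_v` inside `K[x_v : v ∈ V(P)]`. -/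
noncomputable def vertexMonomial (P : Finset Cell) (V : Finset (ℕ × ℕ)) :
    {v : ℕ × ℕ // v ∈ vertexSet P} →₀ ℕ :=
  ∑ v ∈ Finset.filter (fun v : {v : ℕ × ℕ // v ∈ vertexSet P} => (v : ℕ × ℕ) ∈ V)
      (vertexSet P).attach, Finsupp.single v 1

/-! ### The conditions (C1), (C2), (C3) on thin collections of cells -/

/-- (C1): `P` contains no three cells with upper-left vertices
`(i,j), (i+1,j-1), (i+2,j-2)`. -/
def CondC1 (P : Finset Cell) : Prop :=
  ¬ ∃ i m : ℕ, (i, m + 2) ∈ P ∧ (i + 1, m + 1) ∈ P ∧ (i + 2, m) ∈ P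

/-- (C2): for a vertical maximal inner interval `[a, b]` of width one, neither the cell
with lower-right vertex `(a.1, b.2)` nor the cell with upper-left vertex `(a.1+1, a.2)`
belongs to `P`. -/
def CondC2 (P : Finset Cell) : Prop :=
  ∀ a b : ℕ × ℕ, IsMaximalInnerInterval P a b → b.1 = a.1 + 1 →
    (1 ≤ a.1 → (a.1 - 1, b.2) ∉ P) ∧ (1 ≤ a.2 → (a.1 + 1, a.2 - 1) ∉ P)

/-- (C3): for a horizontal maximal inner interval `[a, b]` of height one, neither the cell
with lower-right vertex `(a.1, a.2+1)` nor the cell with upper-left vertex `(b.1, a.2)`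
belongs to `P`. -/
def CondC3 (P : Finset Cell) : Prop :=
  ∀ a b : ℕ × ℕ, IsMaximalInnerInterval P a b → b.2 = a.2 + 1 →
    (1 ≤ a.1 → (a.1 - 1, a.2 + 1) ∉ P) ∧ (1 ≤ a.2 → (b.1, a.2 - 1) ∉ P)


/-! Since `fg ≠ 0`, we have `(f) = (fg) : (g)`, so `(f)` already lies in `C_{fg}`;
every ideal built from `(f)` by colons, sums and intersections is then built the same way
inside `C_{fg}`. -/

theorem Ideal.span_singleton_mul_colon_singleton {R : Type*} [CommSemiring R]
    [IsCancelMulZero R] {a b : R} (hb : b ≠ 0) :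
    (Ideal.span {a * b}).colon {b} = Ideal.span {a} := by
  ext x
  rw [Submodule.mem_colon_singleton, smul_eq_mul, Ideal.mem_span_singleton,
    Ideal.mem_span_singleton, mul_dvd_mul_iff_right hb]

theorem IsInitialMonomialRel.ne_zero {σ K : Type*} [CommSemiring K]
    {lt : (σ →₀ ℕ) → (σ →₀ ℕ) → Prop} {f : MvPolynomial σ K} {μ : σ →₀ ℕ}
    (h : IsInitialMonomialRel lt f μ) : f ≠ 0 := by
  rintro rfl
  simpa using h.1

theorem HasSquarefreeInitial.ne_zero {σ K : Type*} [CommSemiring K] {m : MonomialOrder σ}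
    {f : MvPolynomial σ K} (h : HasSquarefreeInitial m f) : f ≠ 0 :=
  h.choose_spec.1.ne_zero

theorem KnutsonClass.of_span_singleton {σ K : Type*} [Field K] {f h : MvPolynomial σ K}
    (hf : KnutsonClass h (Ideal.span {f})) {I : Ideal (MvPolynomial σ K)}
    (hI : KnutsonClass f I) : KnutsonClass h I := by
  induction hI with
  | base => exact hf
  | colon I J _ ih => exact .colon I J ih
  | add I J _ _ ihI ihJ => exact .add I J ihI ihJ
  | inter I J _ _ ihI ihJ => exact .inter I J ihI ihJ

theorem KnutsonClass.span_singleton_of_mul {σ K : Type*} [Field K] {f g : MvPolynomial σ K}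
    (hg : g ≠ 0) : KnutsonClass (f * g) (Ideal.span {f}) := by
  rw [← Ideal.span_singleton_mul_colon_singleton hg, ← Ideal.colon_span]
  exact .colon _ _ .base

/-- If `in_<(f*g)` is a squarefree monomial, then `C_f ⊆ C_{fg}`. -/
theorem knutsonClass_subset_of_mul {K : Type*} [Field K] {n : ℕ}
    (m : MonomialOrder.{0, v} (Fin n)) (f g : MvPolynomial (Fin n) K)
    (hfg : HasSquarefreeInitial m (f * g)) :
    ∀ I : Ideal (MvPolynomial (Fin n) K), KnutsonClass f I → KnutsonClass (f * g) I := by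
  have hg : g ≠ 0 := right_ne_zero_of_mul hfg.ne_zero
  exact fun I => (KnutsonClass.span_singleton_of_mul hg).of_span_singleton
end

section
/- Let K be a field, P a collection of cells, and adopt the chain partition V_1, …, V_s of V(P) with the associated matrices M_k, polynomials f_k = det M_k and f = ∏_{k=1}^s f_k. With respect to the graded reverse lexicographic order < on S = K[x_v : v ∈ V(P)] induced by x_{(i,j)} < x_{(k,l)} iff i < k, or i = k and j < l, each f_k is nonzero with initial monomial in_<(f_k) = ∏_{v ∈ V_k} x_v, and consequently in_<(f) = ∏_{v ∈ V(P)} x_v. -/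
open MvPolynomial

universe u v

/-! Expanding `det M_k` by the Leibniz formula, the permutation `σ` contributes (up to sign)
the squarefree monomial on the positions `(a, σ a)`, and only the anti-diagonal permutation
contributes `∏_{v ∈ V_k} x_v`. Any other `σ` leaves the anti-diagonal for the first time in some
row `r₀`, and there it lies strictly to the left, since the columns to the right are used by the
earlier rows. That position is then the smallest variable at which the two monomials differ, and
it occurs in the monomial of `σ`, so this monomial is smaller in grevlex. Finally, initial
monomials are additive under products for any strict order compatible with addition, and the
`V_k` partition `V(P)`. -/

lemma varLT_iff_toLex_lt {u v : ℕ × ℕ} : VarLT u v ↔ toLex u < toLex v :=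
  (Prod.Lex.toLex_lt_toLex ..).symm

section Grevlex

variable {σ : Type*} {emb : σ → ℕ × ℕ} {μ ν ρ : σ →₀ ℕ}

lemma grevlexLT_iff : GrevlexLT emb μ ν ↔ μ.degree < ν.degree ∨
    (μ.degree = ν.degree ∧ ∃ v, ν v < μ v ∧ ∀ w, VarLT (emb w) (emb v) → μ w = ν w) :=
  Iff.rfl

lemma grevlexLT_irrefl (μ : σ →₀ ℕ) : ¬ GrevlexLT emb μ μ := by
  rintro (h | ⟨-, v, h, -⟩) <;> exact lt_irrefl _ h

lemma grevlexLT_trans (hemb : Function.Injective emb)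
    (h₁ : GrevlexLT emb μ ν) (h₂ : GrevlexLT emb ν ρ) : GrevlexLT emb μ ρ := by
  rw [grevlexLT_iff] at *
  rcases h₁ with h₁ | ⟨e₁, v₁, hv₁, hw₁⟩ <;> rcases h₂ with h₂ | ⟨e₂, v₂, hv₂, hw₂⟩
  · exact Or.inl (h₁.trans h₂)
  · exact Or.inl (e₂ ▸ h₁)
  · exact Or.inl (e₁ ▸ h₂)
  refine Or.inr ⟨e₁.trans e₂, ?_⟩
  simp only [varLT_iff_toLex_lt] at *
  rcases lt_trichotomy (toLex (emb v₁)) (toLex (emb v₂)) with h | h | h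
  · exact ⟨v₁, hw₂ v₁ h ▸ hv₁, fun w hw => (hw₁ w hw).trans (hw₂ w (hw.trans h))⟩
  · obtain rfl : v₁ = v₂ := hemb (toLex.injective h)
    exact ⟨v₁, hv₂.trans hv₁, fun w hw => (hw₁ w hw).trans (hw₂ w hw)⟩
  · exact ⟨v₂, (hw₁ v₂ h).symm ▸ hv₂, fun w hw => (hw₁ w (hw.trans h)).trans (hw₂ w hw)⟩

lemma grevlexLT_add_right (τ : σ →₀ ℕ) (h : GrevlexLT emb μ ν) :
    GrevlexLT emb (μ + τ) (ν + τ) := by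
  rw [grevlexLT_iff] at *
  simp only [map_add, Finsupp.add_apply, add_lt_add_iff_right, add_left_inj]
  rcases h with h | ⟨e, v, hv, hw⟩
  · exact Or.inl h
  · exact Or.inr ⟨e, v, hv, fun w hw' => by rw [hw w hw']⟩

end Grevlex

section InitialMonomial

variable {σ K : Type*} [CommSemiring K] [NoZeroDivisors K] {lt : (σ →₀ ℕ) → (σ →₀ ℕ) → Prop}

lemma IsInitialMonomialRel.mul (hirr : ∀ μ, ¬ lt μ μ)
    (htrans : ∀ {μ ν ρ}, lt μ ν → lt ν ρ → lt μ ρ)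
    (hadd : ∀ {μ ν} (τ : σ →₀ ℕ), lt μ ν → lt (μ + τ) (ν + τ))
    {f g : MvPolynomial σ K} {μ ν : σ →₀ ℕ}
    (hf : IsInitialMonomialRel lt f μ) (hg : IsInitialMonomialRel lt g ν) :
    IsInitialMonomialRel lt (f * g) (μ + ν) := by
  classical
  obtain ⟨hμ, hfmax⟩ := hf
  obtain ⟨hν, hgmax⟩ := hg
  have hadd' : ∀ {α β} (τ : σ →₀ ℕ), lt α β → lt (τ + α) (τ + β) := fun τ h => by
    simpa only [add_comm τ] using hadd τ h
  have key : ∀ p : (σ →₀ ℕ) × (σ →₀ ℕ), f.coeff p.1 * g.coeff p.2 ≠ 0 → p ≠ (μ, ν) →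
      lt (p.1 + p.2) (μ + ν) := by
    rintro ⟨α, β⟩ hp hne
    have hα := mem_support_iff.mpr (left_ne_zero_of_mul hp)
    have hβ := mem_support_iff.mpr (right_ne_zero_of_mul hp)
    by_cases hαμ : α = μ
    · subst hαμ
      exact hadd' α (hgmax β hβ fun h => hne (by rw [h]))
    · have h₁ := hadd β (hfmax α hα hαμ)
      by_cases hβν : β = ν
      · rwa [hβν] at h₁ ⊢
      · exact htrans h₁ (hadd' μ (hgmax β hβ hβν))
  have hcoeff : (f * g).coeff (μ + ν) = f.coeff μ * g.coeff ν := by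
    rw [coeff_mul, Finset.sum_eq_single_of_mem (μ, ν) (by simp)]
    intro p hp hne
    by_contra h
    exact hirr _ (Finset.HasAntidiagonal.mem_antidiagonal.mp hp ▸ key p h hne)
  refine ⟨mem_support_iff.mpr ?_, fun τ hτ hne => ?_⟩
  · rw [hcoeff]
    exact mul_ne_zero (mem_support_iff.mp hμ) (mem_support_iff.mp hν)
  · obtain ⟨p, hp, hpne⟩ := Finset.exists_ne_zero_of_sum_ne_zero
      (coeff_mul f g τ ▸ mem_support_iff.mp hτ)
    have hpτ : p.1 + p.2 = τ := Finset.HasAntidiagonal.mem_antidiagonal.mp hp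
    rw [← hpτ]
    exact key p hpne (by rintro rfl; exact hne hpτ.symm)

lemma IsInitialMonomialRel.prod [Nontrivial K] (hirr : ∀ μ, ¬ lt μ μ)
    (htrans : ∀ {μ ν ρ}, lt μ ν → lt ν ρ → lt μ ρ)
    (hadd : ∀ {μ ν} (τ : σ →₀ ℕ), lt μ ν → lt (μ + τ) (ν + τ))
    {ι : Type*} (t : Finset ι) {f : ι → MvPolynomial σ K} {μ : ι → σ →₀ ℕ}
    (h : ∀ i ∈ t, IsInitialMonomialRel lt (f i) (μ i)) :
    IsInitialMonomialRel lt (∏ i ∈ t, f i) (∑ i ∈ t, μ i) := by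
  classical
  induction t using Finset.induction_on with
  | empty =>
    refine ⟨by simp, fun ν hν hne => absurd ?_ hne⟩
    simpa [coeff_one, eq_comm] using hν
  | insert a t hat ih =>
    rw [Finset.prod_insert hat, Finset.sum_insert hat]
    exact (h a (t.mem_insert_self a)).mul hirr htrans hadd
      (ih fun i hi => h i (Finset.mem_insert_of_mem hi))

end InitialMonomial

section VertexMonomial

variable {P : Finset Cell}

lemma vertexMonomial_apply (V : Finset (ℕ × ℕ)) (w : {v : ℕ × ℕ // v ∈ vertexSet P}) :
    vertexMonomial P V w = if (w : ℕ × ℕ) ∈ V then 1 else 0 := by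
  classical
  simp [vertexMonomial, Finsupp.finsetSum_apply, Finsupp.single_apply]

lemma degree_vertexMonomial {V : Finset (ℕ × ℕ)} (hV : V ⊆ vertexSet P) :
    (vertexMonomial P V).degree = V.card := by
  classical
  simp only [vertexMonomial, map_sum, Finsupp.degree_single, Finset.sum_const, smul_eq_mul,
    mul_one]
  rw [← Finset.card_image_of_injective _ Subtype.val_injective]
  congr 1
  ext v
  simpa using fun hv => hV hv

lemma grevlexLT_vertexMonomial {A B : Finset (ℕ × ℕ)} (hA : A ⊆ vertexSet P)
    (hB : B ⊆ vertexSet P) (hcard : A.card = B.card) {v : ℕ × ℕ} (hvA : v ∈ A) (hvB : v ∉ B)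
    (hbelow : ∀ w, VarLT w v → (w ∈ A ↔ w ∈ B)) :
    GrevlexLT Subtype.val (vertexMonomial P A) (vertexMonomial P B) := by
  refine grevlexLT_iff.mpr (Or.inr ⟨?_, ⟨v, hA hvA⟩, ?_, fun w hw => ?_⟩)
  · rw [degree_vertexMonomial hA, degree_vertexMonomial hB, hcard]
  · simp [vertexMonomial_apply, hvA, hvB]
  · simp only [vertexMonomial_apply, hbelow w hw]

lemma sum_vertexMonomial {ι : Type*} {t : Finset ι} {V : ι → Finset (ℕ × ℕ)}
    (hV : (t : Set ι).PairwiseDisjoint V) :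
    ∑ k ∈ t, vertexMonomial P (V k) = vertexMonomial P (t.biUnion V) := by
  classical
  ext w
  simp only [Finsupp.finsetSum_apply, vertexMonomial_apply]
  split_ifs with hw
  · obtain ⟨k, hk, hwk⟩ := Finset.mem_biUnion.mp hw
    rw [Finset.sum_eq_single_of_mem k hk fun l hl hlk => if_neg fun hwl =>
      Finset.disjoint_left.mp (hV hl hk hlk) hwl hwk, if_pos hwk]
  · exact Finset.sum_eq_zero fun k hk => if_neg fun hwk => hw (Finset.mem_biUnion.mpr ⟨k, hk, hwk⟩)

lemma prod_X_eq_monomial_vertexMonomial {K ι : Type*} [CommSemiring K] [Fintype ι]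
    {p : ι → ℕ × ℕ} (hp : Function.Injective p) (hP : ∀ r, p r ∈ vertexSet P) :
    ∏ r, (X ⟨p r, hP r⟩ : MvPolynomial {v // v ∈ vertexSet P} K) =
      monomial (vertexMonomial P (Finset.univ.image p)) 1 := by
  classical
  have hq : Function.Injective fun r => (⟨p r, hP r⟩ : {v // v ∈ vertexSet P}) :=
    fun r s h => hp (congrArg Subtype.val h)
  rw [vertexMonomial, monomial_sum_one, ← Finset.prod_image fun r _ s _ h => hq h]
  refine Finset.prod_congr ?_ fun _ _ => rfl
  ext ⟨v, hv⟩
  simp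

end VertexMonomial

lemma Equiv.Perm.exists_lt_rev_of_ne_revPerm {n : ℕ} {σ : Equiv.Perm (Fin n)}
    (hσ : σ ≠ Fin.revPerm) : ∃ r₀, σ r₀ < Fin.rev r₀ ∧ ∀ r < r₀, σ r = Fin.rev r := by
  obtain ⟨r₀, hne, hmin⟩ := wellFounded_lt.has_min {r | σ r ≠ Fin.rev r} <| by
    by_contra h
    exact hσ (Equiv.ext (by simpa [Set.Nonempty] using h))
  have hbelow : ∀ r < r₀, σ r = Fin.rev r := fun r hr => by_contra fun h => hmin r h hr
  refine ⟨r₀, (lt_or_gt_of_ne hne).resolve_right fun hgt => hne ?_, hbelow⟩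
  -- the column `σ r₀` is already used by the row `rev (σ r₀) < r₀`
  have := hbelow _ (Fin.rev_lt_iff.mpr hgt)
  rw [Fin.rev_rev] at this
  exact (Fin.rev_rev _).symm.trans (congrArg Fin.rev (σ.injective this))

section Leibniz

variable (K : Type*) [Field K] {P : Finset Cell} {i j n : ℕ}

/-- The variables of the term of `σ` in the Leibniz expansion of `chainDet K P i j n`. -/
def permVerts (i j : ℕ) (σ : Equiv.Perm (Fin n)) : Finset (ℕ × ℕ) :=
  Finset.univ.image fun r : Fin n => (i + (r : ℕ) + 1, j + (σ r : ℕ) + 1)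

lemma card_permVerts (σ : Equiv.Perm (Fin n)) : (permVerts i j σ).card = n := by
  rw [permVerts, Finset.card_image_of_injective, Finset.card_univ, Fintype.card_fin]
  intro r s h
  simpa [Fin.val_inj] using congrArg Prod.fst h

lemma chainVerts_eq_permVerts_revPerm :
    chainVerts i j n = permVerts i j (Fin.revPerm (n := n)) := by
  ext ⟨a, b⟩
  simp only [chainVerts, permVerts, Finset.mem_image, Finset.mem_Icc, Finset.mem_univ, true_and,
    Fin.revPerm_apply, Fin.val_rev, Prod.mk.injEq]
  constructor
  · rintro ⟨l, ⟨hl₁, hl₂⟩, rfl, rfl⟩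
    exact ⟨⟨l - 1, by omega⟩, by simp only; omega, by simp only; omega⟩
  · rintro ⟨r, rfl, rfl⟩
    exact ⟨r + 1, ⟨by omega, r.isLt⟩, by omega, by omega⟩

lemma mem_permVerts_of_varLT {π π' : Equiv.Perm (Fin n)} {r₀ c : Fin n}
    (hagree : ∀ r < r₀, π r = π' r) (hc : c ≤ π r₀) {w : ℕ × ℕ} (hw : w ∈ permVerts i j π)
    (hlt : VarLT w (i + (r₀ : ℕ) + 1, j + (c : ℕ) + 1)) : w ∈ permVerts i j π' := by
  obtain ⟨r, -, rfl⟩ := Finset.mem_image.mp hw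
  have hr : r < r₀ := by
    rcases hlt with h | ⟨h, h'⟩
    · exact Fin.lt_def.mpr (by simp only at h; omega)
    · obtain rfl : r = r₀ := Fin.ext (by simp only at h; omega)
      exact absurd hc (not_le.mpr (Fin.lt_def.mpr (by simp only at h'; omega)))
  rw [hagree r hr]
  exact Finset.mem_image_of_mem _ (Finset.mem_univ r)

lemma grevlexLT_permVerts_revPerm {σ : Equiv.Perm (Fin n)} (hσ : σ ≠ Fin.revPerm)
    (hP : permVerts i j σ ⊆ vertexSet P)
    (hrev : permVerts i j (Fin.revPerm (n := n)) ⊆ vertexSet P) :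
    GrevlexLT Subtype.val (vertexMonomial P (permVerts i j σ))
      (vertexMonomial P (permVerts i j (Fin.revPerm (n := n)))) := by
  obtain ⟨r₀, hlt, hbelow⟩ := σ.exists_lt_rev_of_ne_revPerm hσ
  refine grevlexLT_vertexMonomial hP hrev (by rw [card_permVerts, card_permVerts])
    (v := (i + (r₀ : ℕ) + 1, j + (σ r₀ : ℕ) + 1))
    (Finset.mem_image_of_mem _ (Finset.mem_univ r₀)) ?_ fun w hw =>
      ⟨fun h => mem_permVerts_of_varLT hbelow le_rfl h hw,
        fun h => mem_permVerts_of_varLT (fun r hr => (hbelow r hr).symm) hlt.le h hw⟩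
  simp only [permVerts, Finset.mem_image, Finset.mem_univ, true_and, Fin.revPerm_apply,
    Prod.mk.injEq, not_exists, not_and]
  intro r hr hc
  obtain rfl : r = r₀ := Fin.ext (by omega)
  exact hlt.ne (Fin.ext (by omega)).symm

variable (P i j n)

lemma chainDet_eq_sum : chainDet K P i j n = ∑ σ : Equiv.Perm (Fin n),
    if permVerts i j σ ⊆ vertexSet P then
      monomial (vertexMonomial P (permVerts i j σ)) ((Equiv.Perm.sign σ : ℤ) : K) else 0 := by
  rw [chainDet, ← Matrix.det_transpose, Matrix.det_apply]
  refine Finset.sum_congr rfl fun σ _ => ?_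
  split_ifs with h
  · have hP : ∀ r : Fin n, (i + (r : ℕ) + 1, j + (σ r : ℕ) + 1) ∈ vertexSet P :=
      fun r => h (Finset.mem_image_of_mem _ (Finset.mem_univ r))
    have hinj : Function.Injective fun r : Fin n => (i + (r : ℕ) + 1, j + (σ r : ℕ) + 1) :=
      fun r s hrs => by simpa [Fin.val_inj] using congrArg Prod.fst hrs
    rw [Finset.prod_congr rfl fun r _ => by
        rw [Matrix.transpose_apply, Matrix.of_apply, dif_pos (hP r)],
      prod_X_eq_monomial_vertexMonomial hinj hP, Units.smul_def, smul_monomial, zsmul_one]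
    rfl
  · obtain ⟨_, hr, hrP⟩ := Finset.not_subset.mp h
    obtain ⟨r, -, rfl⟩ := Finset.mem_image.mp hr
    rw [Finset.prod_eq_zero (Finset.mem_univ r) (by
      rw [Matrix.transpose_apply, Matrix.of_apply, dif_neg hrP]), smul_zero]

lemma coeff_chainDet (ν : {v : ℕ × ℕ // v ∈ vertexSet P} →₀ ℕ) :
    coeff ν (chainDet K P i j n) = ∑ σ ∈ Finset.univ.filter (fun σ : Equiv.Perm (Fin n) =>
      permVerts i j σ ⊆ vertexSet P ∧ vertexMonomial P (permVerts i j σ) = ν),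
        ((Equiv.Perm.sign σ : ℤ) : K) := by
  rw [chainDet_eq_sum, coeff_sum, Finset.sum_filter]
  refine Finset.sum_congr rfl fun σ _ => ?_
  split_ifs <;> simp_all [coeff_monomial]

end Leibniz

theorem isInitialMonomialRel_chainDet (K : Type*) [Field K] {P : Finset Cell} {i j n : ℕ}
    (hch : chainVerts i j n ⊆ vertexSet P) :
    chainDet K P i j n ≠ 0 ∧
      IsInitialMonomialRel (GrevlexLT Subtype.val) (chainDet K P i j n)
        (vertexMonomial P (chainVerts i j n)) := by
  rw [chainVerts_eq_permVerts_revPerm] at hch ⊢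
  set μ := vertexMonomial P (permVerts i j (Fin.revPerm (n := n)))
  have hlt := fun σ hσ hP => grevlexLT_permVerts_revPerm (P := P) (σ := σ) hσ hP hch
  -- only the anti-diagonal term of the Leibniz expansion contributes the monomial `μ`
  have hfilter : Finset.univ.filter (fun σ : Equiv.Perm (Fin n) =>
      permVerts i j σ ⊆ vertexSet P ∧ vertexMonomial P (permVerts i j σ) = μ) =
      {Fin.revPerm} := by
    ext σ
    simp only [Finset.mem_filter, Finset.mem_univ, true_and, Finset.mem_singleton]
    refine ⟨fun ⟨hP, heq⟩ => by_contra fun hσ => grevlexLT_irrefl _ (heq ▸ hlt σ hσ hP),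
      by rintro rfl; exact ⟨hch, rfl⟩⟩
  have hmem : μ ∈ (chainDet K P i j n).support := by
    rw [mem_support_iff, coeff_chainDet, hfilter, Finset.sum_singleton]
    rcases Int.units_eq_one_or (Equiv.Perm.sign (Fin.revPerm (n := n))) with h | h <;> simp [h]
  refine ⟨fun h => by simp [h] at hmem, hmem, fun ν hν hne => ?_⟩
  obtain ⟨σ, hσ, -⟩ := Finset.exists_ne_zero_of_sum_ne_zero
    (coeff_chainDet K P i j n ν ▸ mem_support_iff.mp hν)
  obtain ⟨hP, rfl⟩ := (Finset.mem_filter.mp hσ).2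
  exact hlt σ (by rintro rfl; exact hne rfl) hP

lemma IsDiagChain.chainVerts_subset {P : Finset Cell} {i j n : ℕ} (h : IsDiagChain P i j n) :
    chainVerts i j n ⊆ vertexSet P := by
  intro w hw
  obtain ⟨l, hl, rfl⟩ := Finset.mem_image.mp hw
  exact h.2.1 l (Finset.mem_Icc.mp hl).1 (Finset.mem_Icc.mp hl).2

/-- For the chain partition `V_1, …, V_s` of `V(P)`, with respect to the
graded reverse lexicographic order induced by `x_{(i,j)} < x_{(k,l)}` iff `i < k`, or
`i = k` and `j < l`: every `f_k = det M_k` is nonzero with initial monomial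
`∏_{v ∈ V_k} x_v`, and the initial monomial of `f = ∏ f_k` is `∏_{v ∈ V(P)} x_v`. -/
theorem chainDet_initial_monomial (K : Type*) [Field K] (P : Finset Cell)
    (s : ℕ) (c : Fin s → ℕ × ℕ × ℕ) (hpart : IsDiagChainPartition P s c) :
    (∀ k : Fin s,
      chainDet K P (c k).1 (c k).2.1 (c k).2.2 ≠ 0 ∧
        IsInitialMonomialRel (GrevlexLT (Subtype.val : {v : ℕ × ℕ // v ∈ vertexSet P} → ℕ × ℕ))
          (chainDet K P (c k).1 (c k).2.1 (c k).2.2)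
          (vertexMonomial P (chainVerts (c k).1 (c k).2.1 (c k).2.2))) ∧
    IsInitialMonomialRel (GrevlexLT (Subtype.val : {v : ℕ × ℕ // v ∈ vertexSet P} → ℕ × ℕ))
      (∏ k : Fin s, chainDet K P (c k).1 (c k).2.1 (c k).2.2)
      (vertexMonomial P (vertexSet P)) := by
  obtain ⟨hchains, hdisj, hcover, -⟩ := hpart
  have hfactors := fun k => isInitialMonomialRel_chainDet K (hchains k).chainVerts_subset
  have hsum := sum_vertexMonomial (P := P) (t := Finset.univ)
    (V := fun k => chainVerts (c k).1 (c k).2.1 (c k).2.2) fun k _ l _ hkl => hdisj k l hkl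
  rw [hcover] at hsum
  rw [← hsum]
  exact ⟨hfactors, IsInitialMonomialRel.prod grevlexLT_irrefl
    (grevlexLT_trans Subtype.val_injective) grevlexLT_add_right _ fun k _ => (hfactors k).2⟩
end

section
/- For every integer n ≥ 2, every integer l with 2 ≤ l ≤ n, and every permutation σ of {1, …, n}, at least one of the following holds: (a) there exists an integer i with 1 ≤ i < l such that l + max(σ(i), σ(l)) ≤ n + 2; (b) there exist integers i, j with 1 ≤ i < j ≤ n such that j + max(σ(i), σ(j)) ≤ n + 1. -/
open MvPolynomial

universe u v

/-! Put `m = n + 2 - l`. Exactly `m` indices `i` have `σ i ≤ m`, and at most `n - l` of them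
exceed `l`, so two of them, `i < j`, are at most `l`. If `j = l` this gives (a); otherwise
`j ≤ l - 1` and `j + max (σ i) (σ j) ≤ l - 1 + m = n + 1`, which is (b). -/

open Finset

theorem Set.BijOn.card_filter_comp {α β : Type*} {s : Finset α} {t : Finset β} {f : α → β}
    (hf : Set.BijOn f s t) (p : β → Prop) [DecidablePred p] :
    #{a ∈ s | p (f a)} = #{b ∈ t | p b} :=
  Set.BijOn.finsetCard_eq f <| by
    rw [coe_filter, coe_filter]
    exact hf.inter_mapsTo (Set.mapsTo_preimage f {b | p b}) Set.inter_subset_right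

theorem Finset.card_le_card_filter_le_add {A : Finset ℕ} {n : ℕ} (hA : ∀ a ∈ A, a ≤ n) (l : ℕ) :
    #A ≤ #{a ∈ A | a ≤ l} + (n - l) := by
  have hlarge : {a ∈ A | ¬a ≤ l} ⊆ Ioc l n := fun a ha => by
    rw [mem_filter] at ha
    exact mem_Ioc.mpr ⟨not_le.mp ha.2, hA a ha.1⟩
  calc #A = #{a ∈ A | a ≤ l} + #{a ∈ A | ¬a ≤ l} := (card_filter_add_card_filter_not _).symm
    _ ≤ #{a ∈ A | a ≤ l} + (n - l) := by
      grw [card_le_card hlarge, Nat.card_Ioc]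

theorem Set.BijOn.card_Icc_filter_apply_le {n m : ℕ} {σ : ℕ → ℕ}
    (hσ : Set.BijOn σ (Set.Icc 1 n) (Set.Icc 1 n)) (hmn : m ≤ n) :
    #{i ∈ Finset.Icc 1 n | σ i ≤ m} = m := by
  have hσ' : Set.BijOn σ ↑(Finset.Icc 1 n) ↑(Finset.Icc 1 n) := by simpa only [coe_Icc] using hσ
  have hlow : {b ∈ Finset.Icc 1 n | b ≤ m} = Finset.Icc 1 m := by
    ext b
    simp only [mem_filter, Finset.mem_Icc]
    omega
  rw [hσ'.card_filter_comp (· ≤ m), hlow, Nat.card_Icc, Nat.add_sub_cancel]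

theorem chi_property_general (n l : ℕ) (hl : 2 ≤ l) (hln : l ≤ n)
    (σ : ℕ → ℕ) (hσ : Set.BijOn σ (Set.Icc 1 n) (Set.Icc 1 n)) :
    (∃ i : ℕ, 1 ≤ i ∧ i < l ∧ l + max (σ i) (σ l) ≤ n + 2) ∨
      (∃ i j : ℕ, 1 ≤ i ∧ i < j ∧ j ≤ n ∧ j + max (σ i) (σ j) ≤ n + 1) := by
  set m := n + 2 - l
  set A := {i ∈ Icc 1 n | σ i ≤ m}
  have hA : #A = m := hσ.card_Icc_filter_apply_le (by omega)
  have htwo : 1 < #{i ∈ A | i ≤ l} := by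
    have hA_le : ∀ a ∈ A, a ≤ n := fun a ha => (mem_Icc.mp (mem_filter.mp ha).1).2
    have := card_le_card_filter_le_add hA_le l
    omega
  obtain ⟨i, hi, j, hj, hij⟩ := (one_lt_card_iff_nontrivial.mp htwo).exists_lt
  simp only [A, mem_coe, mem_filter, mem_Icc] at hi hj
  rcases hj.2.eq_or_lt with rfl | hjl
  · exact Or.inl ⟨i, hi.1.1.1, hij, by omega⟩
  · exact Or.inr ⟨i, j, hi.1.1.1, hij, by omega, by omega⟩

/-- For every `n ≥ 2`, every `2 ≤ l ≤ n` and every permutation `σ` of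
`{1, …, n}`, either there is `i < l` with `l + max (σ i) (σ l) ≤ n + 2`, or there are
`i < j` with `j + max (σ i) (σ j) ≤ n + 1`. -/
theorem chi_property (n l : ℕ) (hn : 2 ≤ n) (hl : 2 ≤ l) (hln : l ≤ n)
    (σ : ℕ → ℕ) (hσ : Set.BijOn σ (Set.Icc 1 n) (Set.Icc 1 n)) :
    (∃ i : ℕ, 1 ≤ i ∧ i < l ∧ l + max (σ i) (σ l) ≤ n + 2) ∨
      (∃ i j : ℕ, 1 ≤ i ∧ i < j ∧ j ≤ n ∧ j + max (σ i) (σ j) ≤ n + 1) :=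
  chi_property_general n l hl hln σ hσ
end

section
/- Fix integers n ≥ 2 and l with 2 ≤ l ≤ n. For a permutation σ of {1, …, n}, let S(n,l,σ) = {(i,j) : 1 ≤ i < j ≤ n, and either (j = l and l + max(σ(i), σ(l)) ≤ n + 2) or j + max(σ(i), σ(j)) ≤ n + 1}; this set is nonempty, and let (i_σ, j_σ) denote its minimum element with respect to the graded lexicographic order on ℕ² (where (i,j) precedes (i',j') iff i + j < i' + j', or i + j = i' + j' and i < i'). Then (i_σ, j_σ) is the minimum element of S(n, l, σ ∘ (i_σ j_σ)), where (i_σ j_σ) denotes the transposition of {1, …, n} exchanging i_σ and j_σ. -/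
open MvPolynomial

universe u v

/-- The set `S(n, l, σ)` of pairs `(i, j)`. -/
def Sset (n l : ℕ) (σ : ℕ → ℕ) : Set (ℕ × ℕ) :=
  {p | 1 ≤ p.1 ∧ p.1 < p.2 ∧ p.2 ≤ n ∧
    ((p.2 = l ∧ l + max (σ p.1) (σ l) ≤ n + 2) ∨ p.2 + max (σ p.1) (σ p.2) ≤ n + 1)}

/-- The graded lexicographic order on ℕ². -/
def GLexLE (p q : ℕ × ℕ) : Prop :=
  p.1 + p.2 < q.1 + q.2 ∨ (p.1 + p.2 = q.1 + q.2 ∧ p.1 ≤ q.1)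

/-! Membership of `(i, j)` in `S(n, l, σ)` says that `j + σ x ≤ c(j)` for both `x = i` and
`x = j`, where `c(j)` is `n + 2` at `j = l` and `n + 1` elsewhere. As `c` takes only these two
values, a bound `j + m ≤ c(j)` gives `k + m ≤ c(k)` for every `k < j`.

Swapping `i₀` and `j₀` permutes the two values `σ i₀, σ j₀`, so `(i₀, j₀)` stays in the set. A
pair of `S(n, l, σ ∘ (i₀ j₀))` below `(i₀, j₀)` is turned back into a pair of `S(n, l, σ)` below
`(i₀, j₀)`: the pair itself, or `(i, i₀)` if its second entry is `j₀`; in both cases the new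
value `σ i₀` is controlled by the bound at `j₀ > i₀`. -/

namespace Sset

def cap (n l j : ℕ) : ℕ := if j = l then n + 2 else n + 1

theorem mem_iff {n l i j : ℕ} {σ : ℕ → ℕ} :
    (i, j) ∈ Sset n l σ ↔
      1 ≤ i ∧ i < j ∧ j ≤ n ∧ j + σ i ≤ cap n l j ∧ j + σ j ≤ cap n l j := by
  unfold Sset cap
  by_cases h : j = l
  · simp only [Set.mem_ofPred_eq, h, if_true, true_and]
    omega
  · simp only [Set.mem_ofPred_eq, h, if_false, false_and, false_or]
    omega

theorem add_le_cap_of_lt {n l j k m : ℕ} (h : j + m ≤ cap n l j) (hk : k < j) :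
    k + m ≤ cap n l k := by
  unfold cap at *
  split_ifs at * <;> omega

theorem mem_comp_swap {n l i j : ℕ} {σ : ℕ → ℕ} (h : (i, j) ∈ Sset n l σ) :
    (i, j) ∈ Sset n l (σ ∘ Equiv.swap i j) := by
  rw [mem_iff] at h ⊢
  simp only [Function.comp_apply, Equiv.swap_apply_left, Equiv.swap_apply_right]
  omega

theorem exists_mem_lt_of_mem_comp_swap {n l i₀ j₀ i j : ℕ} {σ : ℕ → ℕ}
    (h₀ : (i₀, j₀) ∈ Sset n l σ) (h : (i, j) ∈ Sset n l (σ ∘ Equiv.swap i₀ j₀))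
    (hlt : ¬ GLexLE (i₀, j₀) (i, j)) : ∃ q ∈ Sset n l σ, ¬ GLexLE (i₀, j₀) q := by
  rw [mem_iff] at h₀ h
  obtain ⟨hi₀, hi₀j₀, hj₀n, hσi₀, -⟩ := h₀
  obtain ⟨hi, hij, hjn, hτi, hτj⟩ := h
  simp only [GLexLE, not_or, not_and, not_le, not_lt] at hlt ⊢
  have hσi₀_below : ∀ k < j₀, k + σ i₀ ≤ cap n l k := fun k hk => add_le_cap_of_lt hσi₀ hk
  have hσ_eq : ∀ x, x ≠ i₀ → x ≠ j₀ → (σ ∘ Equiv.swap i₀ j₀) x = σ x := fun x h₁ h₂ => by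
    rw [Function.comp_apply, Equiv.swap_apply_of_ne_of_ne h₁ h₂]
  by_cases hj : j = j₀
  · subst hj
    rw [hσ_eq i (by omega) (by omega)] at hτi
    exact ⟨(i, i₀), mem_iff.2 ⟨hi, by omega, by omega, add_le_cap_of_lt hτi hi₀j₀,
      hσi₀_below i₀ hi₀j₀⟩, by omega⟩
  · have hσ_le : ∀ x, x ≠ j₀ → (x = i₀ → j < j₀) →
        j + (σ ∘ Equiv.swap i₀ j₀) x ≤ cap n l j → j + σ x ≤ cap n l j := by
      intro x hxj₀ hxi₀ hx
      by_cases hx₀ : x = i₀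
      · subst hx₀
        exact hσi₀_below j (hxi₀ rfl)
      · rwa [hσ_eq x hx₀ hxj₀] at hx
    exact ⟨(i, j), mem_iff.2 ⟨hi, hij, hjn, hσ_le i (by omega) (by omega) hτi,
      hσ_le j hj (by omega) hτj⟩, hlt⟩

end Sset

theorem Sset_min_swap_general (n l : ℕ)
    (σ : ℕ → ℕ)
    (i₀ j₀ : ℕ) (hmem : (i₀, j₀) ∈ Sset n l σ)
    (hmin : ∀ q ∈ Sset n l σ, GLexLE (i₀, j₀) q) :
    (Sset n l σ).Nonempty ∧
      (i₀, j₀) ∈ Sset n l (σ ∘ (Equiv.swap i₀ j₀)) ∧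
      ∀ q ∈ Sset n l (σ ∘ (Equiv.swap i₀ j₀)), GLexLE (i₀, j₀) q := by
  refine ⟨⟨_, hmem⟩, Sset.mem_comp_swap hmem, fun ⟨i, j⟩ hq => ?_⟩
  by_contra hlt
  obtain ⟨q', hq', hlt'⟩ := Sset.exists_mem_lt_of_mem_comp_swap hmem hq hlt
  exact hlt' (hmin q' hq')

/-- `S(n,l,σ)` is nonempty, and if `(i₀, j₀)` is its minimum with
respect to the graded lexicographic order, then `(i₀, j₀)` is also the minimum of
`S(n, l, σ ∘ (i₀ j₀))`. -/
theorem Sset_min_swap (n l : ℕ) (hn : 2 ≤ n) (hl : 2 ≤ l) (hln : l ≤ n)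
    (σ : ℕ → ℕ) (hσ : Set.BijOn σ (Set.Icc 1 n) (Set.Icc 1 n))
    (i₀ j₀ : ℕ) (hmem : (i₀, j₀) ∈ Sset n l σ)
    (hmin : ∀ q ∈ Sset n l σ, GLexLE (i₀, j₀) q) :
    (Sset n l σ).Nonempty ∧
      (i₀, j₀) ∈ Sset n l (σ ∘ (Equiv.swap i₀ j₀)) ∧
      ∀ q ∈ Sset n l (σ ∘ (Equiv.swap i₀ j₀)), GLexLE (i₀, j₀) q :=
  Sset_min_swap_general n l σ i₀ j₀ hmem hmin
end

section
/- Let K be a field and k ≥ 2 an integer. Let P be a horizontally convex polyomino that contains every cell with lower-left vertex (l,m) where l, m ≥ 1 and l + m ≤ k. Let P_{k−1} denote the sub-collection of cells of P whose lower-left vertex (l,m) satisfies l + m ≤ k − 1, and for 1 ≤ l ≤ k − 1 let C_{k,l} denote the cell with lower-left vertex (l, k − l). In S = K[x_v : v ∈ V(P)], let M be the k × k matrix whose (a,b) entry (1 ≤ a, b ≤ k) is x_{(a,b)} if (a,b) ∈ V(P) and 0 otherwise, and set f_k = det M. Then f_k ∉ I_{P_{k−1}}, and f_k ∈ I_{P_{k−1}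 ∪ {C_{k,l}}} for every 1 ≤ l ≤ k − 1. -/
open MvPolynomial

universe u v

/-!
Write `Q` for `P_{k-1} ∪ {C_{k,l}}`. Every 2-minor of the top-left `(l+1) × (k-l+1)` block of `M`
is the binomial of an inner interval of `Q`, so modulo `I_Q` that block has all 2-minors zero.
Since `(l+1) + (k-l+1) = k+2`, Laplace expansion along rows and columns outside the block, down to
matrices that are entirely such a block, shows `det M ∈ I_Q`.

For `f_k ∉ I_{P_{k-1}}`, specialize `x_{(a,b)} ↦ s_a t_b` when `a + b ≤ k + 1` and `x_v ↦ 0`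
otherwise: the inner intervals of `P_{k-1}` lie in the region `a + b ≤ k + 1`, where this is a
rank-one substitution killing their binomials, while `M` becomes anti-triangular with the nonzero
anti-diagonal entries `s_a t_{k+1-a}`.
-/

open Finset

namespace Matrix

variable {R : Type*} [CommRing R]

def TwoMinorsVanishOn {m n : Type*} (M : Matrix m n R) (rs : Set m) (cs : Set n) : Prop :=
  ∀ i ∈ rs, ∀ i' ∈ rs, ∀ j ∈ cs, ∀ j' ∈ cs, M i j * M i' j' = M i j' * M i' j

namespace TwoMinorsVanishOn

variable {m n m' n' : Type*} {M : Matrix m n R} {rs : Set m} {cs : Set n}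

theorem transpose (h : M.TwoMinorsVanishOn rs cs) : Mᵀ.TwoMinorsVanishOn cs rs :=
  fun j hj j' hj' i hi i' hi' => by
    simpa only [transpose_apply, mul_comm] using h i hi i' hi' j hj j' hj'

theorem submatrix (h : M.TwoMinorsVanishOn rs cs) (f : m' → m) (g : n' → n) :
    (M.submatrix f g).TwoMinorsVanishOn (f ⁻¹' rs) (g ⁻¹' cs) :=
  fun _ hi _ hi' _ hj _ hj' => h _ hi _ hi' _ hj _ hj'

theorem mono {rs' : Set m} {cs' : Set n} (h : M.TwoMinorsVanishOn rs cs) (hr : rs' ⊆ rs)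
    (hc : cs' ⊆ cs) : M.TwoMinorsVanishOn rs' cs' :=
  fun _ hi _ hi' _ hj _ hj' => h _ (hr hi) _ (hr hi') _ (hc hj) _ (hc hj')

end TwoMinorsVanishOn

theorem _root_.Fin.card_preimage_succAbove {n : ℕ} (p : Fin (n + 1)) (s : Finset (Fin (n + 1))) :
    #(s.preimage p.succAbove Fin.succAbove_right_injective.injOn) = #(s.erase p) := by
  classical
  rw [card_preimage]
  congr 1
  ext x
  simp [and_comm]

/-- Expanding along a row `r` outside the block, each minor keeps all rows of the block and all
but at most one of its columns. -/
theorem det_eq_zero_of_twoMinorsVanishOn_of_notMem {n : ℕ}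
    (ih : ∀ (N : Matrix (Fin n) (Fin n) R) (rs cs : Finset (Fin n)),
      N.TwoMinorsVanishOn rs cs → n + 2 ≤ #rs + #cs → N.det = 0)
    {M : Matrix (Fin (n + 1)) (Fin (n + 1)) R} {rs cs : Finset (Fin (n + 1))}
    (h : M.TwoMinorsVanishOn rs cs) (hcard : n + 3 ≤ #rs + #cs) {r : Fin (n + 1)}
    (hr : r ∉ rs) : M.det = 0 := by
  rw [det_succ_row M r]
  refine sum_eq_zero fun j _ => ?_
  have hrs := Fin.card_preimage_succAbove r rs
  rw [erase_eq_of_notMem hr] at hrs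
  have hcs := Fin.card_preimage_succAbove j cs
  have := pred_card_le_card_erase (s := cs) (a := j)
  have hminor : (M.submatrix r.succAbove j.succAbove).TwoMinorsVanishOn
      (rs.preimage r.succAbove Fin.succAbove_right_injective.injOn)
      (cs.preimage j.succAbove Fin.succAbove_right_injective.injOn) := by
    rw [coe_preimage, coe_preimage]
    exact h.submatrix r.succAbove j.succAbove
  rw [ih _ _ _ hminor (by omega), mul_zero]

theorem det_eq_zero_of_twoMinorsVanishOn : ∀ {n : ℕ} {M : Matrix (Fin n) (Fin n) R}
    {rs cs : Finset (Fin n)}, M.TwoMinorsVanishOn rs cs → n + 2 ≤ #rs + #cs → M.det = 0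
  | 0, _, rs, cs, _, hcard => by
    have := card_le_univ rs
    have := card_le_univ cs
    simp only [Fintype.card_fin] at *
    omega
  | n + 1, M, rs, cs, h, hcard => by
    have ih := fun N rs cs => @det_eq_zero_of_twoMinorsVanishOn n N rs cs
    by_cases hrs : ∃ r, r ∉ rs
    · obtain ⟨r, hr⟩ := hrs
      exact det_eq_zero_of_twoMinorsVanishOn_of_notMem ih h hcard hr
    by_cases hcs : ∃ c, c ∉ cs
    · obtain ⟨c, hc⟩ := hcs
      rw [← det_transpose]
      exact det_eq_zero_of_twoMinorsVanishOn_of_notMem ih h.transpose (by omega) hc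
    push Not at hrs hcs
    rw [eq_univ_of_forall hrs, eq_univ_of_forall hcs, card_univ, Fintype.card_fin] at hcard
    obtain rfl | hn : n = 1 ∨ 2 ≤ n := by omega
    · rw [det_fin_two, sub_eq_zero]
      exact h 0 (hrs 0) 1 (hrs 1) 0 (hcs 0) 1 (hcs 1)
    · refine det_eq_zero_of_twoMinorsVanishOn_of_notMem ih (rs := rs.erase 0)
        (h.mono (by simp) subset_rfl) ?_ (notMem_erase 0 rs)
      rw [card_erase_of_mem (hrs 0), eq_univ_of_forall hrs, eq_univ_of_forall hcs, card_univ,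
        Fintype.card_fin]
      omega

theorem det_mem_of_twoMinors_mem {n : ℕ} {M : Matrix (Fin n) (Fin n) R} {I : Ideal R}
    {rs cs : Finset (Fin n)}
    (h : ∀ i ∈ rs, ∀ i' ∈ rs, ∀ j ∈ cs, ∀ j' ∈ cs, M i j * M i' j' - M i j' * M i' j ∈ I)
    (hcard : n + 2 ≤ #rs + #cs) : M.det ∈ I := by
  rw [← Ideal.Quotient.eq_zero_iff_mem, RingHom.map_det]
  refine det_eq_zero_of_twoMinorsVanishOn (fun i hi i' hi' j hj j' hj' => ?_) hcard
  simp only [RingHom.mapMatrix_apply, map_apply, ← map_mul, Ideal.Quotient.eq]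
  exact h i hi i' hi' j hj j' hj'

theorem det_ne_zero_of_antitriangular [IsDomain R] {n : ℕ} {M : Matrix (Fin n) (Fin n) R}
    (hzero : ∀ a b : Fin n, n ≤ a + b → M a b = 0)
    (hanti : ∀ a b : Fin n, a + b + 1 = n → M a b ≠ 0) : M.det ≠ 0 := by
  have htri : (M.submatrix id Fin.revPerm).IsUpperTriangular := fun i j hji => by
    have : (j : ℕ) < i := hji
    exact hzero _ _ (by simp only [id_eq, Fin.revPerm_apply, Fin.val_rev]; omega)
  have hdet := det_permute' Fin.revPerm M
  rw [det_of_isUpperTriangular htri] at hdet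
  refine fun h => prod_ne_zero_iff.2 (fun i _ => hanti _ _ ?_) (hdet.trans (by rw [h, mul_zero]))
  simp only [id_eq, Fin.revPerm_apply, Fin.val_rev]
  omega

end Matrix

noncomputable def vertexVar (K : Type*) [Field K] (P : Finset Cell) (v : ℕ × ℕ) : PolyRing K P :=
  if h : v ∈ vertexSet P then X ⟨v, h⟩ else 0

theorem chainDet_eq_det_vertexVar (K : Type*) [Field K] (P : Finset Cell) (i j n : ℕ) :
    chainDet K P i j n = (Matrix.of fun a b : Fin n => vertexVar K P (i + a + 1, j + b + 1)).det :=
  rfl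

section

variable {K : Type*} [Field K] {P Q : Finset Cell}

theorem mem_vertexSet_of_cell_mem {x y a b : ℕ} (h : (x, y) ∈ P) (ha : a = x ∨ a = x + 1)
    (hb : b = y ∨ b = y + 1) : (a, b) ∈ vertexSet P := by
  refine mem_biUnion.2 ⟨(x, y), h, ?_⟩
  rcases ha with rfl | rfl <;> rcases hb with rfl | rfl <;> simp [cellVertices]

theorem IsInnerInterval.binomial_mem_cellsIdeal (hQP : Q ⊆ P) {u w : ℕ × ℕ}
    (h : IsInnerInterval Q u w) :
    vertexVar K P u * vertexVar K P w - vertexVar K P (u.1, w.2) * vertexVar K P (w.1, u.2) ∈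
      cellsIdeal K P Q := by
  obtain ⟨h1, h2, hin⟩ := h
  have hcell : ∀ x y, u.1 ≤ x → x < w.1 → u.2 ≤ y → y < w.2 → (x, y) ∈ P :=
    fun x y hx hx' hy hy' => hQP (hin (x, y) ⟨hx, hx', hy, hy'⟩)
  have hvert : ∀ a b, (a = u.1 ∨ a = w.1) → (b = u.2 ∨ b = w.2) → (a, b) ∈ vertexSet P :=
    fun a b ha hb => mem_vertexSet_of_cell_mem
      (hcell (min a (w.1 - 1)) (min b (w.2 - 1)) (by omega) (by omega) (by omega) (by omega))
      (by omega) (by omega)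
  have hu := hvert u.1 u.2 (.inl rfl) (.inl rfl)
  have hw := hvert w.1 w.2 (.inr rfl) (.inr rfl)
  have hc := hvert u.1 w.2 (.inl rfl) (.inr rfl)
  have hd := hvert w.1 u.2 (.inr rfl) (.inl rfl)
  simp only [vertexVar, dif_pos hu, dif_pos hw, dif_pos hc, dif_pos hd]
  exact Ideal.subset_span ⟨⟨u, hu⟩, ⟨w, hw⟩, _, _, ⟨h1, h2, hin⟩, rfl, rfl, rfl⟩

theorem vertexVar_twoMinor_mem_cellsIdeal (hQP : Q ⊆ P) {a a' b b' : ℕ}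
    (hQ : ∀ c, CellInInterval (min a a', min b b') (max a a', max b b') c → c ∈ Q) :
    vertexVar K P (a, b) * vertexVar K P (a', b') - vertexVar K P (a, b') * vertexVar K P (a', b) ∈
      cellsIdeal K P Q := by
  wlog ha : a ≤ a' generalizing a a'
  · convert neg_mem (this (by rwa [min_comm, max_comm]) (le_of_not_ge ha)) using 1
    ring
  wlog hb : b ≤ b' generalizing b b'
  · convert neg_mem (this (by rwa [min_comm b', max_comm b']) (le_of_not_ge hb)) using 1
    ring
  rcases ha.eq_or_lt with rfl | ha
  · rw [mul_comm, sub_self]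
    exact zero_mem _
  rcases hb.eq_or_lt with rfl | hb
  · rw [sub_self]
    exact zero_mem _
  rw [min_eq_left ha.le, max_eq_right ha.le, min_eq_left hb.le, max_eq_right hb.le] at hQ
  exact IsInnerInterval.binomial_mem_cellsIdeal hQP ⟨ha, hb, hQ⟩

theorem mem_vertexSet_of_add_le {k : ℕ} (hk : 2 ≤ k)
    (hcells : ∀ l m : ℕ, 1 ≤ l → 1 ≤ m → l + m ≤ k → (l, m) ∈ P) {a b : ℕ} (ha : 1 ≤ a)
    (hb : 1 ≤ b) (hab : a + b ≤ k + 1) : (a, b) ∈ vertexSet P := by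
  by_cases hsum : a + b ≤ k
  · exact mem_vertexSet_of_cell_mem (hcells a b ha hb hsum) (.inl rfl) (.inl rfl)
  by_cases ha' : 2 ≤ a
  · exact mem_vertexSet_of_cell_mem (hcells (a - 1) b (by omega) hb (by omega)) (by omega)
      (.inl rfl)
  · exact mem_vertexSet_of_cell_mem (hcells a (b - 1) ha (by omega) (by omega)) (.inl rfl)
      (by omega)

theorem chainDet_mem_cellsIdeal_insert {k l : ℕ}
    (hcells : ∀ l m : ℕ, 1 ≤ l → 1 ≤ m → l + m ≤ k → (l, m) ∈ P) (hl : 1 ≤ l) (hlk : l + 1 ≤ k) :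
    chainDet K P 0 0 k ∈
      cellsIdeal K P (insert (l, k - l) (P.filter (fun x => x.1 + x.2 ≤ k - 1))) := by
  set Q := insert (l, k - l) (P.filter (fun x => x.1 + x.2 ≤ k - 1))
  have hQP : Q ⊆ P :=
    insert_subset (hcells l (k - l) hl (by omega) (by omega)) (filter_subset _ _)
  have hQ : ∀ x y, 1 ≤ x → 1 ≤ y → x ≤ l → y ≤ k - l → (x, y) ∈ Q := by
    intro x y hx hy hxl hyl
    by_cases hxy : x + y ≤ k - 1
    · exact mem_insert_of_mem (mem_filter.2 ⟨hcells x y hx hy (by omega), hxy⟩)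
    · obtain ⟨rfl, rfl⟩ : x = l ∧ y = k - l := by omega
      exact mem_insert_self _ _
  rw [chainDet_eq_det_vertexVar]
  refine Matrix.det_mem_of_twoMinors_mem (rs := Iic ⟨l, by omega⟩) (cs := Iic ⟨k - l, by omega⟩)
    (fun a ha a' ha' b hb b' hb' => ?_) (by simp only [Fin.card_Iic]; omega)
  simp only [mem_Iic, Fin.le_def] at ha ha' hb hb'
  simp only [Matrix.of_apply, zero_add]
  refine vertexVar_twoMinor_mem_cellsIdeal hQP fun c ⟨h1, h2, h3, h4⟩ => ?_
  exact hQ c.1 c.2 (by omega) (by omega) (by omega) (by omega)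

noncomputable def staircaseEval (K : Type*) [Field K] (P : Finset Cell) (n : ℕ) :
    PolyRing K P →ₐ[K] MvPolynomial (ℕ ⊕ ℕ) K :=
  aeval fun v => if v.1.1 + v.1.2 ≤ n + 1 then X (.inl v.1.1) * X (.inr v.1.2) else 0

theorem staircaseEval_vertexVar (n : ℕ) (v : ℕ × ℕ) :
    staircaseEval K P n (vertexVar K P v) =
      if v ∈ vertexSet P ∧ v.1 + v.2 ≤ n + 1 then X (.inl v.1) * X (.inr v.2) else 0 := by
  unfold vertexVar
  split_ifs <;> simp_all [staircaseEval]

theorem cellsIdeal_le_ker_staircaseEval {n : ℕ} (hQ : ∀ c ∈ Q, c.1 + c.2 + 1 ≤ n) :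
    cellsIdeal K P Q ≤ RingHom.ker (staircaseEval K P n) := by
  refine Ideal.span_le.2 ?_
  rintro _ ⟨a, b, c, d, ⟨h1, h2, hin⟩, hc, hd, rfl⟩
  have ha := hQ _ (hin a ⟨le_rfl, h1, le_rfl, h2⟩)
  have hb := hQ _ (hin (b.1.1 - 1, b.1.2 - 1) ⟨by omega, by omega, by omega, by omega⟩)
  simp only [Prod.ext_iff] at hc hd
  simp only [SetLike.mem_coe, RingHom.mem_ker, map_sub, map_mul, staircaseEval, aeval_X]
  rw [if_pos (by omega), if_pos (by omega), if_pos (by omega), if_pos (by omega), hc.1, hc.2,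
    hd.1, hd.2]
  ring

theorem chainDet_notMem_cellsIdeal {k : ℕ} (hk : 2 ≤ k)
    (hcells : ∀ l m : ℕ, 1 ≤ l → 1 ≤ m → l + m ≤ k → (l, m) ∈ P) :
    chainDet K P 0 0 k ∉ cellsIdeal K P (P.filter (fun x => x.1 + x.2 ≤ k - 1)) := by
  intro hmem
  have hker := cellsIdeal_le_ker_staircaseEval (n := k)
    (fun c hc => by have := (mem_filter.1 hc).2; omega) hmem
  rw [RingHom.mem_ker, chainDet_eq_det_vertexVar, AlgHom.map_det] at hker
  refine Matrix.det_ne_zero_of_antitriangular (fun a b hab => ?_) (fun a b hab => ?_) hker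
  · simp only [AlgHom.mapMatrix_apply, Matrix.map_apply, Matrix.of_apply, staircaseEval_vertexVar]
    rw [if_neg (by omega)]
  · simp only [AlgHom.mapMatrix_apply, Matrix.map_apply, Matrix.of_apply, staircaseEval_vertexVar]
    rw [if_pos ⟨mem_vertexSet_of_add_le hk hcells (by omega) (by omega) (by omega), by omega⟩]
    exact mul_ne_zero (X_ne_zero _) (X_ne_zero _)

end

theorem chainDet_mem_cellsIdeal_general (K : Type*) [Field K] (k : ℕ) (hk : 2 ≤ k)
    (P : Finset Cell)
    (hcells : ∀ l m : ℕ, 1 ≤ l → 1 ≤ m → l + m ≤ k → (l, m) ∈ P) :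
    chainDet K P 0 0 k ∉ cellsIdeal K P (P.filter (fun x => x.1 + x.2 ≤ k - 1)) ∧
      ∀ l : ℕ, 1 ≤ l → l ≤ k - 1 →
        chainDet K P 0 0 k ∈
          cellsIdeal K P (insert (l, k - l) (P.filter (fun x => x.1 + x.2 ≤ k - 1))) :=
  ⟨chainDet_notMem_cellsIdeal hk hcells, fun _ hl hlk =>
    chainDet_mem_cellsIdeal_insert hcells hl (by omega)⟩

/-- If the horizontally convex polyomino `P` contains all cells with
lower-left vertex `(l, m)`, `l, m ≥ 1`, `l + m ≤ k`, then the determinant `f_k` of the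
`k × k` matrix with entries `x_{(a,b)}` (or `0`) lies outside `I_{P_{k-1}}` and inside
`I_{P_{k-1} ∪ {C_{k,l}}}` for every `1 ≤ l ≤ k - 1`. -/
theorem chainDet_mem_cellsIdeal (K : Type*) [Field K] (k : ℕ) (hk : 2 ≤ k)
    (P : Finset Cell) (hpoly : IsPolyomino P) (hconv : HorizontallyConvex P)
    (hcells : ∀ l m : ℕ, 1 ≤ l → 1 ≤ m → l + m ≤ k → (l, m) ∈ P) :
    chainDet K P 0 0 k ∉ cellsIdeal K P (P.filter (fun x => x.1 + x.2 ≤ k - 1)) ∧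
      ∀ l : ℕ, 1 ≤ l → l ≤ k - 1 →
        chainDet K P 0 0 k ∈
          cellsIdeal K P (insert (l, k - l) (P.filter (fun x => x.1 + x.2 ≤ k - 1))) :=
  chainDet_mem_cellsIdeal_general K k hk P hcells
end
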